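/- Let 0 < d < n be integers and set H(i) = min(i, d) for 0 ≤ i ≤ n. Let S be the set of functions P : {0, 1, …, n} → ℚ such that P(0) = 0, P(n) = d, the increments P(i+1) − P(i) are weakly decreasing in i (concavity), P(i) ≤ H(i) for all i, and for every 0 < i < n at which the increment changes (P(i+1) − P(i) ≠ P(i) − P(i−1)) one has P(i) = H(i). Then S has exactly d(n−d) + 1 elements. -/

import Mathlib

/-!
The slopes of such a polygon `P` decrease from at most `1` to at least `0`. Let `a ≤ d` be the
last point where `P` meets the diagonal part of `H`, and `b ≥ d` the first point where it meets the
flat part. Then `P` has slope `1` up to `a` and slope `0` from `b` on; strictly between `a` and `b`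
it does not touch `H`, hence has no breakpoint, so it is a straight line on `[a, b]`. Thus `P` is
determined by `(a, b)`, which is either `(d, d)` (then `P = H`) or any pair with `a < d < b ≤ n`,
and conversely each such pair yields a polygon of the set, with its own slope sequence. This gives
`d (n - d) + 1` polygons.
-/

section Telescoping

variable {α : Type*} [Field α] [LinearOrder α] [IsStrictOrderedRing α] {f : ℕ → α} {c : α}
  {i j n : ℕ}

theorem sub_le_mul_of_succ_sub_le (hij : i ≤ j)
    (h : ∀ k, i ≤ k → k < j → f (k + 1) - f k ≤ c) : f j - f i ≤ ((j : α) - i) * c := by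
  induction j, hij using Nat.le_induction with
  | base => simp
  | succ k hik ih =>
    have hk := h k hik (by omega)
    have ih := ih fun l hil hlk => h l hil (by omega)
    push_cast
    linarith

theorem mul_le_sub_of_le_succ_sub (hij : i ≤ j)
    (h : ∀ k, i ≤ k → k < j → c ≤ f (k + 1) - f k) : ((j : α) - i) * c ≤ f j - f i := by
  have := sub_le_mul_of_succ_sub_le (f := -f) (c := -c) hij fun k hik hkj => by
    simp only [Pi.neg_apply]
    linarith [h k hik hkj]
  simp only [Pi.neg_apply] at this
  linarith

theorem eq_add_mul_of_succ_sub_eq (hij : i ≤ j)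
    (h : ∀ k, i ≤ k → k < j → f (k + 1) - f k = c) : f j = f i + ((j : α) - i) * c := by
  have := sub_le_mul_of_succ_sub_le hij fun k hik hkj => (h k hik hkj).le
  have := mul_le_sub_of_le_succ_sub hij fun k hik hkj => (h k hik hkj).ge
  linarith

end Telescoping

theorem succ_sub_le_succ_sub_of_le {β : Type*} [Sub β] [Preorder β] {f : ℕ → β} {i j n : ℕ}
    (hf : ∀ k, k + 1 < n → f (k + 2) - f (k + 1) ≤ f (k + 1) - f k) (hij : i ≤ j) (hjn : j < n) :
    f (j + 1) - f j ≤ f (i + 1) - f i := by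
  induction j, hij using Nat.le_induction with
  | base => rfl
  | succ k hik ih => exact (hf k hjn).trans (ih (by omega))

namespace HodgeNewton

/-- Only the values of `Q` at `0, …, n` matter. -/
structure IsStronglyRegular (n d : ℕ) (Q : ℕ → ℚ) : Prop where
  zero : Q 0 = 0
  last : Q n = d
  concave : ∀ i, i + 1 < n → Q (i + 2) - Q (i + 1) ≤ Q (i + 1) - Q i
  le_min : ∀ i ≤ n, Q i ≤ min (i : ℚ) d
  breakpoint : ∀ i, i + 1 < n → Q (i + 2) - Q (i + 1) ≠ Q (i + 1) - Q i →
    Q (i + 1) = min ((i : ℚ) + 1) d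

def midSlope (d a b : ℕ) : ℚ := (d - a) / (b - a)

def polygon (d a b i : ℕ) : ℚ :=
  if i ≤ a then i else if b ≤ i then d else a + (i - a) * midSlope d a b

def admissiblePairs (n d : ℕ) : Finset (ℕ × ℕ) :=
  Finset.range d ×ˢ Finset.Icc (d + 1) n ∪ {(d, d)}

variable {n d a b i j : ℕ}

theorem mem_admissiblePairs :
    (a, b) ∈ admissiblePairs n d ↔ a < d ∧ d < b ∧ b ≤ n ∨ a = d ∧ b = d := by
  simp only [admissiblePairs, Finset.mem_union, Finset.mem_product, Finset.mem_range,
    Finset.mem_Icc, Finset.mem_singleton, Prod.mk.injEq]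
  omega

theorem card_admissiblePairs : (admissiblePairs n d).card = d * (n - d) + 1 := by
  rw [admissiblePairs, Finset.card_union_of_disjoint (by simp), Finset.card_product,
    Finset.card_range, Nat.card_Icc, Finset.card_singleton, Nat.add_sub_add_right]

theorem midSlope_nonneg (had : a ≤ d) (hdb : d ≤ b) : 0 ≤ midSlope d a b :=
  div_nonneg (sub_nonneg.2 (Nat.cast_le.2 had)) (sub_nonneg.2 (Nat.cast_le.2 (had.trans hdb)))

theorem midSlope_le_one (had : a ≤ d) (hdb : d ≤ b) : midSlope d a b ≤ 1 :=
  div_le_one_of_le₀ (sub_le_sub_right (Nat.cast_le.2 hdb) _)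
    (sub_nonneg.2 (Nat.cast_le.2 (had.trans hdb)))

theorem midSlope_pos (had : a < d) (hdb : d ≤ b) : 0 < midSlope d a b :=
  div_pos (sub_pos.2 (Nat.cast_lt.2 had)) (sub_pos.2 (Nat.cast_lt.2 (had.trans_le hdb)))

theorem midSlope_lt_one (had : a ≤ d) (hdb : d < b) : midSlope d a b < 1 :=
  (div_lt_one (sub_pos.2 (Nat.cast_lt.2 (had.trans_lt hdb)))).2
    (sub_lt_sub_right (Nat.cast_lt.2 hdb) _)

theorem add_mul_midSlope (hab : a < b) : (a : ℚ) + (b - a) * midSlope d a b = d := by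
  have : (a : ℚ) < b := by exact_mod_cast hab
  rw [midSlope, mul_div_cancel₀ _ (by linarith)]
  ring

theorem polygon_of_le (h : i ≤ a) : polygon d a b i = i := if_pos h

theorem polygon_of_ge (had : a ≤ d) (hdb : d ≤ b) (h : b ≤ i) : polygon d a b i = d := by
  rw [polygon]
  split_ifs with hia
  · rw [show i = d by omega]
  · rfl

theorem polygon_of_le_of_le (hai : a ≤ i) (hib : i ≤ b) :
    polygon d a b i = a + (i - a) * midSlope d a b := by
  rw [polygon]
  split_ifs with hia hbi
  · simp [show i = a by omega]
  · rw [show i = b by omega, add_mul_midSlope (by omega)]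
  · rfl

theorem polygon_succ_sub (had : a ≤ d) (hdb : d ≤ b) :
    polygon d a b (i + 1) - polygon d a b i =
      if i < a then 1 else if i < b then midSlope d a b else 0 := by
  split_ifs with hia hib
  · rw [polygon_of_le hia, polygon_of_le hia.le]
    push_cast
    ring
  · rw [polygon_of_le_of_le (by omega) hib, polygon_of_le_of_le (by omega) hib.le]
    push_cast
    ring
  · rw [polygon_of_ge had hdb (by omega), polygon_of_ge had hdb (by omega), sub_self]

theorem polygon_le_min (had : a ≤ d) (hdb : d ≤ b) : polygon d a b i ≤ min (i : ℚ) d := by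
  rcases le_or_gt i a with hia | hai
  · rw [polygon_of_le hia]
    exact le_min le_rfl (by exact_mod_cast hia.trans had)
  rcases le_or_gt b i with hbi | hib
  · rw [polygon_of_ge had hdb hbi]
    exact le_min (by exact_mod_cast hdb.trans hbi) le_rfl
  rw [polygon_of_le_of_le hai.le hib.le]
  have hai : (a : ℚ) ≤ i := by exact_mod_cast hai.le
  have hib : (i : ℚ) ≤ b := by exact_mod_cast hib.le
  have h0 := midSlope_nonneg had hdb
  have h1 := midSlope_le_one had hdb
  have hd := add_mul_midSlope (d := d) (by omega : a < b)
  refine le_min ?_ ?_ <;> nlinarith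

theorem polygon_eq_min_of_le_or_le (had : a ≤ d) (hdb : d ≤ b) (h : i ≤ a ∨ b ≤ i) :
    polygon d a b i = min (i : ℚ) d := by
  rcases h with hia | hbi
  · rw [polygon_of_le hia, min_eq_left (by exact_mod_cast hia.trans had)]
  · rw [polygon_of_ge had hdb hbi, min_eq_right (by exact_mod_cast hdb.trans hbi)]

theorem isStronglyRegular_polygon (had : a ≤ d) (hdb : d ≤ b) (hbn : b ≤ n) :
    IsStronglyRegular n d (polygon d a b) where
  zero := by rw [polygon_of_le (Nat.zero_le a), Nat.cast_zero]
  last := polygon_of_ge had hdb hbn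
  concave i _ := by
    have h0 := midSlope_nonneg had hdb
    have h1 := midSlope_le_one had hdb
    rw [polygon_succ_sub had hdb, polygon_succ_sub had hdb]
    split_ifs <;> first | omega | linarith
  le_min _ _ := polygon_le_min had hdb
  breakpoint i _ hne := by
    have hi : i + 1 ≤ a ∨ b ≤ i + 1 := by
      by_contra! hmid
      rw [polygon_succ_sub had hdb, polygon_succ_sub had hdb, if_neg (by omega),
        if_pos (by omega), if_neg (by omega), if_pos (by omega)] at hne
      exact hne rfl
    rw [polygon_eq_min_of_le_or_le had hdb hi, Nat.cast_succ]

theorem polygon_succ_sub_eq_one_iff (h : (a, b) ∈ admissiblePairs n d) :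
    polygon d a b (i + 1) - polygon d a b i = 1 ↔ i < a := by
  have h := mem_admissiblePairs.1 h
  rw [polygon_succ_sub (by omega) (by omega)]
  split_ifs with hia hib
  · simp [hia]
  · simp only [hia, iff_false]
    exact (midSlope_lt_one (by omega) (by omega)).ne
  · simp [hia]

theorem polygon_succ_sub_eq_zero_iff (h : (a, b) ∈ admissiblePairs n d) :
    polygon d a b (i + 1) - polygon d a b i = 0 ↔ b ≤ i := by
  have h := mem_admissiblePairs.1 h
  rw [polygon_succ_sub (by omega) (by omega)]
  split_ifs with hia hib
  · simp only [one_ne_zero, false_iff]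
    omega
  · have : 0 < midSlope d a b := midSlope_pos (by omega) (by omega)
    simp only [this.ne', false_iff]
    omega
  · simp only [true_iff]
    omega

theorem polygon_injOn (hdn : d ≤ n) :
    Set.InjOn (fun (ab : ℕ × ℕ) (i : Fin (n + 1)) => polygon d ab.1 ab.2 i)
      (admissiblePairs n d) := by
  rintro ⟨a, b⟩ hab ⟨a', b'⟩ hab' heq
  have heq : ∀ i ≤ n, polygon d a b i = polygon d a' b' i := fun i hi =>
    congrFun heq ⟨i, by omega⟩
  have hsub : ∀ i < n, polygon d a b (i + 1) - polygon d a b i =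
      polygon d a' b' (i + 1) - polygon d a' b' i := fun i hi => by
    rw [heq i hi.le, heq (i + 1) hi]
  have ha : ∀ i < n, i < a ↔ i < a' := fun i hi => by
    rw [← polygon_succ_sub_eq_one_iff hab, ← polygon_succ_sub_eq_one_iff hab', hsub i hi]
  have hb : ∀ i < n, b ≤ i ↔ b' ≤ i := fun i hi => by
    rw [← polygon_succ_sub_eq_zero_iff hab, ← polygon_succ_sub_eq_zero_iff hab', hsub i hi]
  have := mem_admissiblePairs.1 hab
  have := mem_admissiblePairs.1 hab'
  have := ha a
  have := ha a'
  have := hb b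
  have := hb b'
  rw [Prod.mk.injEq]
  omega

namespace IsStronglyRegular

variable {Q : ℕ → ℚ} (hQ : IsStronglyRegular n d Q)
include hQ

theorem congr {Q' : ℕ → ℚ} (h : ∀ i ≤ n, Q i = Q' i) : IsStronglyRegular n d Q' where
  zero := by rw [← h 0 (Nat.zero_le n), hQ.zero]
  last := by rw [← h n le_rfl, hQ.last]
  concave i hi := by
    rw [← h i (by omega), ← h (i + 1) (by omega), ← h (i + 2) (by omega)]
    exact hQ.concave i hi
  le_min i hi := h i hi ▸ hQ.le_min i hi
  breakpoint i hi := by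
    rw [← h i (by omega), ← h (i + 1) (by omega), ← h (i + 2) (by omega)]
    exact hQ.breakpoint i hi

theorem d_le_n : d ≤ n := by
  have := hQ.last ▸ hQ.le_min n le_rfl
  exact_mod_cast this.trans (min_le_left _ _)

theorem succ_sub_le_one (hi : i < n) : Q (i + 1) - Q i ≤ 1 := by
  have h1 := hQ.le_min 1 (by omega)
  calc Q (i + 1) - Q i ≤ Q (0 + 1) - Q 0 :=
        succ_sub_le_succ_sub_of_le hQ.concave (Nat.zero_le i) hi
    _ ≤ 1 := by
        rw [hQ.zero, zero_add, sub_zero]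
        exact_mod_cast h1.trans (min_le_left _ _)

theorem succ_sub_nonneg (hi : i < n) : 0 ≤ Q (i + 1) - Q i := by
  have hn := hQ.le_min (n - 1) (by omega)
  calc 0 ≤ Q (n - 1 + 1) - Q (n - 1) := by
        rw [Nat.sub_add_cancel (by omega), hQ.last]
        linarith [min_le_right ((n - 1 : ℕ) : ℚ) d]
    _ ≤ Q (i + 1) - Q i := succ_sub_le_succ_sub_of_le hQ.concave (by omega) (by omega)

theorem eq_self_of_le (ha : Q a = a) (han : a ≤ n) (hia : i ≤ a) : Q i = i := by
  have h := sub_le_mul_of_succ_sub_le hia fun k _ hka => hQ.succ_sub_le_one (by omega)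
  linarith [hQ.le_min i (by omega), min_le_left (i : ℚ) d]

theorem eq_of_le (hb : Q b = d) (hbi : b ≤ i) (hin : i ≤ n) : Q i = d := by
  have h := mul_le_sub_of_le_succ_sub hbi fun k _ hki => hQ.succ_sub_nonneg (by omega)
  linarith [hQ.le_min i hin, min_le_right (i : ℚ) d]

theorem eq_add_mul_of_forall_ne_min (hoff : ∀ k, a < k → k < b → Q k ≠ min (k : ℚ) d)
    (hbn : b ≤ n) (haj : a ≤ j) (hjb : j ≤ b) :
    Q j = Q a + ((j : ℚ) - a) * (Q (a + 1) - Q a) := by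
  refine eq_add_mul_of_succ_sub_eq haj fun k hak hkj => ?_
  induction k, hak using Nat.le_induction with
  | base => rfl
  | succ k hak ih =>
    rw [← ih (by omega)]
    by_contra hne
    exact hoff (k + 1) (by omega) (by omega) (by
      rw [Nat.cast_succ]
      exact hQ.breakpoint k (by omega) hne)

theorem exists_eq_polygon :
    ∃ a b, (a, b) ∈ admissiblePairs n d ∧ ∀ i ≤ n, Q i = polygon d a b i := by
  have hdn := hQ.d_le_n
  set a := Nat.findGreatest (fun i => Q i = i) d
  have ha : Q a = a := Nat.findGreatest_spec (P := fun i => Q i = i) (Nat.zero_le d)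
    (by rw [hQ.zero, Nat.cast_zero])
  have had : a ≤ d := Nat.findGreatest_le d
  have hex : ∃ b, Q b = d := ⟨n, hQ.last⟩
  set b := Nat.find hex
  have hb : Q b = d := Nat.find_spec hex
  have hbn : b ≤ n := Nat.find_min' hex hQ.last
  have hdb : d ≤ b := by
    have := hb ▸ hQ.le_min b hbn
    exact_mod_cast this.trans (min_le_left _ _)
  have hoff : ∀ k, a < k → k < b → Q k ≠ min (k : ℚ) d := by
    intro k hak hkb hk
    rcases le_total k d with hkd | hdk
    · rw [min_eq_left (by exact_mod_cast hkd)] at hk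
      exact Nat.findGreatest_is_greatest hak hkd hk
    · rw [min_eq_right (by exact_mod_cast hdk)] at hk
      exact Nat.find_min hex hkb hk
  have hline (j) (haj : a ≤ j) (hjb : j ≤ b) :=
    hQ.eq_add_mul_of_forall_ne_min hoff hbn haj hjb
  refine ⟨a, b, mem_admissiblePairs.2 ?_, fun i hin => ?_⟩
  · rcases had.lt_or_eq with had | had
    · refine Or.inl ⟨had, hdb.lt_of_ne fun hbd => ?_, hbn⟩
      exact Nat.findGreatest_is_greatest had le_rfl (by rwa [← hbd] at hb)
    · exact Or.inr ⟨had, le_antisymm (Nat.find_min' hex (by rw [← had, ha])) hdb⟩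
  rcases le_or_gt i a with hia | hai
  · rw [polygon_of_le hia, hQ.eq_self_of_le ha (by omega) hia]
  rcases le_or_gt b i with hbi | hib
  · rw [polygon_of_ge had hdb hbi, hQ.eq_of_le hb hbi hin]
  have hab : a < b := hai.trans hib
  have hslope : Q (a + 1) - Q a = midSlope d a b := by
    have hba : (b : ℚ) - a ≠ 0 := sub_ne_zero.2 (by exact_mod_cast hab.ne')
    rw [midSlope, eq_div_iff hba]
    linarith [hline b hab.le le_rfl]
  rw [polygon_of_le_of_le hai.le hib.le, hline i hai.le hib.le, hslope, ha]

end IsStronglyRegular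

open Fin.NatCast in
theorem setOf_isStronglyRegular_eq_image (hdn : d ≤ n) :
    {P : Fin (n + 1) → ℚ | IsStronglyRegular n d fun i : ℕ => P i} =
      (admissiblePairs n d).image fun ab (i : Fin (n + 1)) => polygon d ab.1 ab.2 i := by
  ext P
  simp only [Set.mem_ofPred_eq, Finset.coe_image, Set.mem_image, Finset.mem_coe, Prod.exists]
  constructor
  · intro hP
    obtain ⟨a, b, hab, hPab⟩ := hP.exists_eq_polygon
    exact ⟨a, b, hab, funext fun i => by simpa using (hPab i i.is_le).symm⟩
  · rintro ⟨a, b, hab, rfl⟩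
    have := mem_admissiblePairs.1 hab
    have hpoly : IsStronglyRegular n d (polygon d a b) :=
      isStronglyRegular_polygon (by omega) (by omega) (by omega)
    exact hpoly.congr fun i hi => congrArg _ (Fin.val_cast_of_lt (Nat.lt_succ_of_le hi)).symm

open Fin.NatCast in
theorem ncard_setOf_isStronglyRegular (hdn : d ≤ n) :
    {P : Fin (n + 1) → ℚ | IsStronglyRegular n d fun i : ℕ => P i}.ncard = d * (n - d) + 1 := by
  rw [setOf_isStronglyRegular_eq_image hdn, Set.ncard_coe_finset,
    Finset.card_image_of_injOn (polygon_injOn hdn), card_admissiblePairs]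

end HodgeNewton

/-- The set of concave polygons `P` from `(0,0)` to `(n,d)` lying below the Hodge polygon
`H(i) = min(i,d)`, all of whose breakpoints lie on `H`, has exactly `d(n-d)+1` elements. -/
theorem stmt1 (n d : ℕ) (hdn : d < n) :
    Set.ncard {P : Fin (n + 1) → ℚ |
      P 0 = 0 ∧
      P (Fin.last n) = (d : ℚ) ∧
      (∀ i : ℕ, ∀ h : i + 1 < n,
        P ⟨i + 2, by omega⟩ - P ⟨i + 1, by omega⟩ ≤ P ⟨i + 1, by omega⟩ - P ⟨i, by omega⟩) ∧
      (∀ i : ℕ, ∀ h : i ≤ n, P ⟨i, by omega⟩ ≤ min (i : ℚ) (d : ℚ)) ∧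
      (∀ i : ℕ, ∀ h : i + 1 < n,
        P ⟨i + 2, by omega⟩ - P ⟨i + 1, by omega⟩ ≠ P ⟨i + 1, by omega⟩ - P ⟨i, by omega⟩ →
          P ⟨i + 1, by omega⟩ = min ((i : ℚ) + 1) (d : ℚ))} = d * (n - d) + 1 := by
  convert HodgeNewton.ncard_setOf_isStronglyRegular hdn.le using 2
  ext P
  simp only [Set.mem_ofPred_eq, ← Fin.natCast_eq_mk]
  constructor <;> rintro ⟨h0, hlast, hconcave, hle, hbreak⟩ <;>
    exact ⟨by simpa using h0, by simpa using hlast, hconcave, hle, hbreak⟩
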